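/- Let G be a finite group and φ an automorphism of G such that G = [G, φ]. If N is a central φ-invariant subgroup of G such that G/N has order at most c and the minimal right Engel sink of φ in G⟨φ⟩ has cardinality m, then |G| is bounded in terms of c and m. (Concretely: |G'| is bounded in terms of c by Schur's theorem, and |G/G'| ≤ m since G/G' is abelian with G/G' = [G/G', φ].) -/

import Mathlib

open scoped commutatorElement

/-- Iterated left Engel commutator `[x, _n h]`, with `[x, _0 h] = x`. -/
def lEngel {H : Type} [Group H] (h : H) : H → ℕ → H
  | x, 0 => x
  | x, n + 1 => ⁅lEngel h x n, h⁆

/-- Iterated right Engel commutator `[a, _n x]`, with `[a, _0 x] = a`. -/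
def rEngel {H : Type} [Group H] (a : H) : H → ℕ → H
  | _, 0 => a
  | x, n + 1 => ⁅rEngel a x n, x⁆

/-- A left Engel sink of `h`. -/
def IsLeftEngelSink {H : Type} [Group H] (h : H) (L : Set H) : Prop :=
  ∀ x : H, ∃ N : ℕ, ∀ n ≥ N, lEngel h x n ∈ L

/-- The minimal left Engel sink of `h`. -/
def IsMinLeftEngelSink {H : Type} [Group H] (h : H) (L : Set H) : Prop :=
  IsLeftEngelSink h L ∧ ∀ L' : Set H, IsLeftEngelSink h L' → L ⊆ L'

/-- A right Engel sink of `a`. -/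
def IsRightEngelSink {H : Type} [Group H] (a : H) (R : Set H) : Prop :=
  ∀ x : H, ∃ N : ℕ, ∀ n ≥ N, rEngel a x n ∈ R

/-- The minimal right Engel sink of `a`. -/
def IsMinRightEngelSink {H : Type} [Group H] (a : H) (R : Set H) : Prop :=
  IsRightEngelSink a R ∧ ∀ R' : Set H, IsRightEngelSink a R' → R ⊆ R'

/-!
Since `N` is central of index at most `c`, so is `Z(G)`, and Schur's theorem in its quantitative
form `Subgroup.card_commutator_dvd_index_center_pow` bounds `|G'|` in terms of `c`.

On `A = G/G'` the commutator `g ↦ ⁅g, φ⁆` induces the endomorphism `θ a = a / aᵠ`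
(`Abelianization.commutatorMap φ`), which is onto because `G = [G, φ]`, hence a permutation of the
finite set `A`. For `r ∈ G` we have `⁅r, g⁻¹φ⁆ ≡ θ r` modulo `G'`, so the Engel commutators
`[φ, _n g⁻¹φ]` (`n ≥ 1`) lift the `θ`-orbit of `g G'`. That orbit is periodic, so `g G'` is the
image of arbitrarily long Engel commutators, hence of an element of the sink: `|G/G'| ≤ m`.
-/

open Subgroup

section Commutators

variable {K : Type*} [Group K]

lemma commutatorElement_mem_of_left_mem {G : Subgroup K} [G.Normal] {g : K} (hg : g ∈ G)
    (x : K) : ⁅g, x⁆ ∈ G :=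
  commutator_le_left G ⊤ (commutator_mem_commutator hg (mem_top x))

lemma commutatorElement_inv_mul_mem {G : Subgroup K} [hG : G.Normal] {g : K} (hg : g ∈ G)
    (x : K) : ⁅x, g⁻¹ * x⁆ ∈ G := by
  rw [show ⁅x, g⁻¹ * x⁆ = x * g⁻¹ * x⁻¹ * g by group]
  exact G.mul_mem (hG.conj_mem _ (G.inv_mem hg) x) hg

lemma commutatorElement_mul_mem_center {z w : K} (hz : z ∈ center K) (hw : w ∈ center K)
    (g h : K) : ⁅g * z, h * w⁆ = ⁅g, h⁆ := by
  rw [mem_center_iff] at hz hw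
  simp only [commutatorElement_def, mul_inv_rev]
  calc g * z * (h * w) * (z⁻¹ * g⁻¹) * (w⁻¹ * h⁻¹)
      = g * (z * (h * w)) * z⁻¹ * g⁻¹ * (w⁻¹ * h⁻¹) := by group
    _ = g * h * (w * g⁻¹) * w⁻¹ * h⁻¹ := by rw [← hz]; group
    _ = g * h * g⁻¹ * h⁻¹ := by rw [← hw]; group

lemma commutatorSet_eq_range_out :
    commutatorSet K =
      Set.range fun p : (K ⧸ center K) × (K ⧸ center K) ↦ ⁅p.1.out, p.2.out⁆ := by
  refine Set.Subset.antisymm ?_ (Set.range_subset_iff.mpr fun _ ↦ commutator_mem_commutatorSet _ _)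
  rintro _ ⟨g, h, rfl⟩
  obtain ⟨⟨z, hz⟩, hgz⟩ := QuotientGroup.mk_out_eq_mul (center K) g
  obtain ⟨⟨w, hw⟩, hhw⟩ := QuotientGroup.mk_out_eq_mul (center K) h
  exact ⟨(g, h), by simp only [hgz, hhw, commutatorElement_mul_mem_center hz hw]⟩

lemma card_commutatorSet_le_index_center_sq [(center K).FiniteIndex] :
    Nat.card (commutatorSet K) ≤ (center K).index ^ 2 := by
  rw [commutatorSet_eq_range_out]
  exact (Finite.card_range_le _).trans_eq (by rw [Nat.card_prod, sq, index])

lemma card_commutator_le_of_index_center_le [(center K).FiniteIndex] {c : ℕ}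
    (hc : (center K).index ≤ c) : Nat.card (_root_.commutator K) ≤ c ^ (c ^ 3 + 1) := by
  have : Finite (commutatorSet K) := by
    rw [commutatorSet_eq_range_out]
    exact Set.finite_range _
  set i := (center K).index
  have hi : 0 < i := Nat.pos_of_ne_zero FiniteIndex.index_ne_zero
  have hexp : i * Nat.card (commutatorSet K) ≤ c ^ 3 :=
    (Nat.mul_le_mul hc (card_commutatorSet_le_index_center_sq.trans
      (Nat.pow_le_pow_left hc 2))).trans_eq (by ring)
  calc Nat.card (_root_.commutator K) ≤ i ^ (i * Nat.card (commutatorSet K) + 1) :=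
        Nat.le_of_dvd (by positivity) (card_commutator_dvd_index_center_pow K)
    _ ≤ c ^ (i * Nat.card (commutatorSet K) + 1) := Nat.pow_le_pow_left hc _
    _ ≤ c ^ (c ^ 3 + 1) := Nat.pow_le_pow_right (hi.trans_le hc) (by omega)

lemma index_center_le_relIndex {G : Subgroup K} (N : Subgroup K) [(N.subgroupOf G).FiniteIndex]
    (hN : ∀ n ∈ N, ∀ g ∈ G, n * g = g * n) : (center G).index ≤ N.relIndex G :=
  index_antitone fun _ hn ↦ mem_center_iff.mpr fun k ↦ Subtype.ext (hN _ hn _ k.2).symm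

end Commutators

namespace Abelianization

variable {H : Type*} [Group H] {G : Subgroup H} [G.Normal]

def commutatorMap (φ : H) : Abelianization G →* Abelianization G :=
  MonoidHom.id _ / map (MulAut.conjNormal φ).toMonoidHom

lemma commutatorMap_of (φ : H) (g : G) :
    commutatorMap φ (of g) = of g / of (MulAut.conjNormal φ g) := rfl

lemma of_commutatorElement_mul {φ r g : H} (hr : r ∈ G) (hg : g ∈ G) (h : ⁅r, g * φ⁆ ∈ G) :
    of (⟨⁅r, g * φ⁆, h⟩ : G) = commutatorMap φ (of ⟨r, hr⟩) := by
  have : (⟨⁅r, g * φ⁆, h⟩ : G) =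
      ⟨r, hr⟩ * ⟨g, hg⟩ * (MulAut.conjNormal φ ⟨r, hr⟩)⁻¹ * ⟨g, hg⟩⁻¹ := by
    ext; simp [MulAut.conjNormal_apply, commutatorElement_def, mul_assoc]
  rw [this, commutatorMap_of, map_mul, map_mul, map_mul, map_inv, map_inv,
    mul_right_comm (of _) (of _), mul_inv_cancel_right, div_eq_mul_inv]

lemma of_commutatorElement_inv_mul {φ g : H} (hg : g ∈ G) (h : ⁅φ, g⁻¹ * φ⁆ ∈ G) :
    of (⟨⁅φ, g⁻¹ * φ⁆, h⟩ : G) = commutatorMap φ (of ⟨g, hg⟩) := by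
  have : (⟨⁅φ, g⁻¹ * φ⁆, h⟩ : G) = (MulAut.conjNormal φ ⟨g, hg⟩)⁻¹ * ⟨g, hg⟩ := by
    ext; simp [MulAut.conjNormal_apply, commutatorElement_def, mul_assoc]
  rw [this, commutatorMap_of, map_mul, map_inv, div_eq_mul_inv, mul_comm]

lemma commutatorMap_surjective {φ : H} (hG : closure {x | ∃ g ∈ G, x = ⁅g, φ⁆} = G) :
    Function.Surjective (commutatorMap (G := G) φ) := by
  suffices G ≤ ((commutatorMap φ).range.comap of).map G.subtype by
    intro a
    obtain ⟨g, rfl⟩ := QuotientGroup.mk_surjective a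
    obtain ⟨g', hg', hgg'⟩ := this g.2
    rwa [Subtype.val_injective hgg'] at hg'
  refine hG.symm.le.trans ((closure_le _).mpr ?_)
  rintro _ ⟨g, hg, rfl⟩
  refine ⟨⟨_, commutatorElement_mem_of_left_mem hg φ⟩, ⟨of ⟨g, hg⟩, ?_⟩, rfl⟩
  rw [commutatorMap_of, ← map_div]
  congr 1
  ext
  simp [MulAut.conjNormal_apply, commutatorElement_def, div_eq_mul_inv, mul_assoc]

end Abelianization

section RightEngel

variable {H : Type} [Group H] {G : Subgroup H} [G.Normal]

lemma rEngel_succ_mem {a x : H} (h : ⁅a, x⁆ ∈ G) : ∀ n, rEngel a x (n + 1) ∈ G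
  | 0 => h
  | n + 1 => commutatorElement_mem_of_left_mem (rEngel_succ_mem h n) x

lemma Abelianization.of_rEngel_succ {φ g : H} (hg : g ∈ G) (n : ℕ)
    (h : rEngel φ (g⁻¹ * φ) (n + 1) ∈ G) :
    of (⟨_, h⟩ : G) = (commutatorMap φ)^[n + 1] (of ⟨g, hg⟩) := by
  induction n with
  | zero => exact of_commutatorElement_inv_mul hg h
  | succ n ih =>
    have hr := rEngel_succ_mem (commutatorElement_inv_mul_mem hg φ) n
    rw [Function.iterate_succ_apply', ← ih hr]
    exact of_commutatorElement_mul hr (G.inv_mem hg) h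

theorem Abelianization.exists_mem_isRightEngelSink [Finite G] {φ : H} {R : Set H}
    (hG : closure {x | ∃ g ∈ G, x = ⁅g, φ⁆} = G) (hR : IsRightEngelSink φ R)
    (a : Abelianization G) : ∃ r, ∃ h : r ∈ G, r ∈ R ∧ of ⟨r, h⟩ = a := by
  obtain ⟨⟨g, hg⟩, rfl⟩ := QuotientGroup.mk_surjective a
  have hinj := Finite.injective_iff_surjective.mpr (commutatorMap_surjective hG)
  obtain ⟨k, hk, hper⟩ := hinj.mem_periodicPts (of ⟨g, hg⟩)
  obtain ⟨M, hM⟩ := hR (g⁻¹ * φ)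
  obtain ⟨n, hn⟩ := Nat.exists_eq_add_one_of_ne_zero (Nat.mul_ne_zero hk.ne' M.succ_ne_zero)
  have h := rEngel_succ_mem (commutatorElement_inv_mul_mem hg φ) n
  refine ⟨_, h, hM _ (by nlinarith), ?_⟩
  rw [of_rEngel_succ hg n h, ← hn]
  exact (hper.mul_const _).eq

theorem Abelianization.card_le_card_of_isRightEngelSink [Finite G] {φ : H} {R : Set H}
    [Finite R] (hG : closure {x | ∃ g ∈ G, x = ⁅g, φ⁆} = G) (hR : IsRightEngelSink φ R) :
    Nat.card (Abelianization G) ≤ Nat.card R := by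
  choose r hrG hrR hr using exists_mem_isRightEngelSink hG hR
  refine Nat.card_le_card_of_injective (fun a ↦ ⟨r a, hrR a⟩) fun a b hab ↦ ?_
  rw [← hr a, ← hr b]
  congr 1
  exact Subtype.ext (Subtype.mk.inj hab)

end RightEngel

theorem stmt15 (c m : ℕ) : ∃ B : ℕ,
    ∀ (H : Type) (_ : Group H) (_ : Finite H) (G : Subgroup H) (_ : G.Normal)
      (φ : H) (N : Subgroup H) (R : Set H),
      G ⊔ Subgroup.zpowers φ = ⊤ →
      Subgroup.closure {x : H | ∃ g ∈ G, x = ⁅g, φ⁆} = G →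
      N ≤ G → (∀ n ∈ N, ∀ g ∈ G, n * g = g * n) → (∀ n ∈ N, φ * n * φ⁻¹ ∈ N) →
      N.relIndex G ≤ c →
      IsMinRightEngelSink φ R → Nat.card R = m →
      Nat.card G ≤ B := by
  refine ⟨c ^ (c ^ 3 + 1) * m, fun H _ _ G _ φ N R _ hG _ hN _ hc hR hm ↦ ?_⟩
  have hZ : (center G).index ≤ c := (index_center_le_relIndex N hN).trans hc
  calc Nat.card G = Nat.card (_root_.commutator G) * Nat.card (Abelianization G) :=
        (card_mul_index _).symm
    _ ≤ c ^ (c ^ 3 + 1) * m :=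
        Nat.mul_le_mul (card_commutator_le_of_index_center_le hZ)
          (hm ▸ Abelianization.card_le_card_of_isRightEngelSink hG hR.1)
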